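/- Let X ⊆ ℝ^d be a nonempty closed convex set with metric projection P_X, and let f_1, …, f_n : ℝ^d → ℝ be differentiable, μ-strongly convex and L-smooth with 0 < μ ≤ L; set f = (1/n)Σ_l f_l and let x* be the unique minimizer of f over X. Let φ, π ∈ ℝⁿ be positive stochastic vectors, 0 < η < 1/(nL), λ ∈ (0, 1], and x_1, …, x_n ∈ ℝ^d. Define w_i = (1 − λ)x_i + λ P_X(x_i − η n π_i ∇f(x_i)). Then D(w, φ) ≤ q_π(η, λ)·D(x, φ) + 2λ·q_π(η, 1)·√(Σ_i φ_i ‖x_i − x*‖²), where q_π(η, λ) = max_i (1 − λ·η n π_i·μ). -/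

import Mathlib

/-!
Write `α_i = ηnπ_i` and `T_i v = P (v - α_i ∇f(v))`, so that `w_i = (1 - λ) x_i + λ T_i x_i`.
The projection `P` is nonexpansive, and a gradient step of length `α ≤ 1/L` contracts by
`1 - αμ`: this is the Baillon–Haddad co-coercivity of `∇f - μ id`, the gradient of the convex,
`(L - μ)`-smooth function `f - μ‖·‖²/2`. Hence every `T_i` is a `(1 - α_iμ)`-contraction, and the
first-order optimality condition at `x*` makes `x*` a common fixed point of all of them.
Routing `w_i - w_j` through `x*` gives
`‖w_i - w_j‖ ≤ q_π(η, λ) ‖x_i - x_j‖ + 2λ q_π(η, 1) ‖x_j - x*‖`, and Minkowski's inequality for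
the `φ_i φ_j`-weighted `ℓ²` norm over pairs `(i, j)` turns this into the bound on `D`.
-/

open Finset RealInnerProductSpace

/-- Consensus error `D(u, a) = √(Σ_i Σ_j a_i a_j ‖u_i − u_j‖²)`. -/
noncomputable def Derr {n d : ℕ} (a : Fin n → ℝ) (u : Fin n → EuclideanSpace ℝ (Fin d)) : ℝ :=
  Real.sqrt (∑ i, ∑ j, a i * a j * ‖u i - u j‖ ^ 2)

/-- `q_π(η, λ) = max_i (1 − λ·ηnπ_i·μ)`. -/
noncomputable def qmax {n : ℕ} [NeZero n] (π : Fin n → ℝ) (μ η lam : ℝ) : ℝ :=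
  Finset.univ.sup' Finset.univ_nonempty (fun i => 1 - lam * (η * n * π i) * μ)

section Projection

variable {H : Type*} [NormedAddCommGroup H] [InnerProductSpace ℝ H]
  {X : Set H} {P : H → H}

theorem inner_sub_proj_le_zero (hX : Convex ℝ X) (hPmem : ∀ v, P v ∈ X)
    (hPproj : ∀ v, ∀ u ∈ X, ‖v - P v‖ ≤ ‖v - u‖) (v : H) :
    ∀ u ∈ X, ⟪v - P v, u - P v⟫ ≤ 0 := by
  have : Nonempty X := ⟨⟨P v, hPmem v⟩⟩
  refine (norm_eq_iInf_iff_real_inner_le_zero hX (hPmem v)).1 (le_antisymm ?_ ?_)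
  · exact le_ciInf fun u => hPproj v u u.2
  · exact ciInf_le ⟨0, Set.forall_mem_range.2 fun _ => norm_nonneg _⟩ (⟨P v, hPmem v⟩ : X)

theorem norm_sub_sq_le_inner_of_inner_le_zero {v w a b : H} (ha : a ∈ X) (hb : b ∈ X)
    (hva : ∀ u ∈ X, ⟪v - a, u - a⟫ ≤ 0) (hwb : ∀ u ∈ X, ⟪w - b, u - b⟫ ≤ 0) :
    ‖a - b‖ ^ 2 ≤ ⟪v - w, a - b⟫ := by
  have h₁ := hva b hb
  have h₂ := hwb a ha
  rw [← neg_sub a b, inner_neg_right] at h₁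
  rw [show v - w = (v - a) - (w - b) + (a - b) by abel, inner_add_left, inner_sub_left,
    real_inner_self_eq_norm_sq]
  linarith

theorem norm_proj_sub_proj_le (hX : Convex ℝ X) (hPmem : ∀ v, P v ∈ X)
    (hPproj : ∀ v, ∀ u ∈ X, ‖v - P v‖ ≤ ‖v - u‖) (v w : H) : ‖P v - P w‖ ≤ ‖v - w‖ := by
  have h := norm_sub_sq_le_inner_of_inner_le_zero (hPmem v) (hPmem w)
    (inner_sub_proj_le_zero hX hPmem hPproj v) (inner_sub_proj_le_zero hX hPmem hPproj w)
  have hcs := real_inner_le_norm (v - w) (P v - P w)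
  nlinarith [norm_nonneg (P v - P w), norm_nonneg (v - w)]

theorem proj_eq_of_inner_le_zero (hX : Convex ℝ X) (hPmem : ∀ v, P v ∈ X)
    (hPproj : ∀ v, ∀ u ∈ X, ‖v - P v‖ ≤ ‖v - u‖) {v z : H} (hz : z ∈ X)
    (hvz : ∀ u ∈ X, ⟪v - z, u - z⟫ ≤ 0) : P v = z := by
  have h := norm_sub_sq_le_inner_of_inner_le_zero (hPmem v) hz
    (inner_sub_proj_le_zero hX hPmem hPproj v) hvz
  rw [sub_self, inner_zero_left] at h
  exact sub_eq_zero.1 <| norm_eq_zero.1 <|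
    (pow_eq_zero_iff two_ne_zero).1 (le_antisymm h (sq_nonneg _))

end Projection

section FirstOrder

variable {H : Type*} [NormedAddCommGroup H] [InnerProductSpace ℝ H] [CompleteSpace H]
  {F : H → ℝ} {g : H → H}

theorem add_inner_add_sq_le_of_inner_sub_ge {c : ℝ} (hF : ∀ x, HasGradientAt F (g x) x)
    (hg : ∀ u v, c * ‖u - v‖ ^ 2 ≤ ⟪g u - g v, u - v⟫) (x y : H) :
    F x + ⟪g x, y - x⟫ + c / 2 * ‖y - x‖ ^ 2 ≤ F y := by
  set v := y - x
  let φ : ℝ → ℝ := fun t => F (x + t • v) - t * ⟪g x, v⟫ - c / 2 * t ^ 2 * ‖v‖ ^ 2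
  have hφ : ∀ t, HasDerivAt φ (⟪g (x + t • v), v⟫ - ⟪g x, v⟫ - c * t * ‖v‖ ^ 2) t := by
    intro t
    have hline : HasDerivAt (fun s : ℝ => x + s • v) v t := by
      simpa using ((hasDerivAt_id t).smul_const v).const_add x
    have hFline := (hF (x + t • v)).hasFDerivAt.comp_hasDerivAt t hline
    refine ((hFline.sub ((hasDerivAt_id t).mul_const ⟪g x, v⟫)).sub
      (((hasDerivAt_pow 2 t).const_mul (c / 2)).mul_const (‖v‖ ^ 2))).congr_deriv ?_
    simp only [InnerProductSpace.toDual_apply_apply]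
    ring
  have hφ' : ∀ t ∈ interior (Set.Ici (0 : ℝ)),
      0 ≤ ⟪g (x + t • v), v⟫ - ⟪g x, v⟫ - c * t * ‖v‖ ^ 2 := by
    rw [interior_Ici]
    intro t (ht : 0 < t)
    have h := hg (x + t • v) x
    rw [add_sub_cancel_left, inner_smul_right, norm_smul, Real.norm_of_nonneg ht.le,
      inner_sub_left] at h
    nlinarith
  have hφmono : MonotoneOn φ (Set.Ici 0) :=
    monotoneOn_of_hasDerivWithinAt_nonneg (convex_Ici 0)
      (fun t _ => (hφ t).continuousAt.continuousWithinAt)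
      (fun t _ => (hφ t).hasDerivWithinAt) hφ'
  have h01 := hφmono Set.self_mem_Ici (Set.mem_Ici.2 zero_le_one) zero_le_one
  simp only [φ, v, zero_smul, add_zero, one_smul, add_sub_cancel] at h01
  linarith

theorem le_add_inner_add_sq_of_lipschitz {L : ℝ} (hF : ∀ x, HasGradientAt F (g x) x)
    (hg : ∀ u v, ‖g u - g v‖ ≤ L * ‖u - v‖) (x y : H) :
    F y ≤ F x + ⟪g x, y - x⟫ + L / 2 * ‖y - x‖ ^ 2 := by
  have hneg : ∀ x, HasGradientAt (-F) (-g x) x := fun x => by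
    simpa [hasGradientAt_iff_hasFDerivAt] using (hF x).hasFDerivAt.neg
  have hcoer : ∀ u v, -L * ‖u - v‖ ^ 2 ≤ ⟪(-g) u - (-g) v, u - v⟫ := fun u v => by
    have hcs := real_inner_le_norm (g u - g v) (u - v)
    have hgl := mul_le_mul_of_nonneg_right (hg u v) (norm_nonneg (u - v))
    rw [Pi.neg_apply, Pi.neg_apply, neg_sub_neg, ← neg_sub (g u), inner_neg_left]
    nlinarith
  have h := add_inner_add_sq_le_of_inner_sub_ge hneg hcoer x y
  simp only [Pi.neg_apply, inner_neg_left] at h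
  linarith

end FirstOrder

section Cocoercive

variable {H : Type*} [NormedAddCommGroup H] [InnerProductSpace ℝ H]

theorem norm_sub_sq_le_mul_inner_of_bounds {h : H → ℝ} {g : H → H} {K : ℝ} (hK : 0 ≤ K)
    (hlow : ∀ x y, h x + ⟪g x, y - x⟫ ≤ h y)
    (hup : ∀ x y, h y ≤ h x + ⟪g x, y - x⟫ + K / 2 * ‖y - x‖ ^ 2) (u v : H) :
    ‖g u - g v‖ ^ 2 ≤ K * ⟪g u - g v, u - v⟫ := by
  set D := g u - g v
  -- compare `h` at `u - t • D` and `v + t • D` with its bounds at `u` and `v`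
  have key : ∀ t : ℝ, (2 * t - K * t ^ 2) * ‖D‖ ^ 2 ≤ ⟪D, u - v⟫ := by
    intro t
    have h1 := hlow v (u - t • D)
    have h2 := hup u (u - t • D)
    have h3 := hlow u (v + t • D)
    have h4 := hup v (v + t • D)
    rw [sub_sub_cancel_left, norm_neg, norm_smul, mul_pow, Real.norm_eq_abs, sq_abs,
      inner_neg_right, inner_smul_right] at h2
    rw [add_sub_cancel_left, norm_smul, mul_pow, Real.norm_eq_abs, sq_abs,
      inner_smul_right] at h4
    rw [sub_right_comm, inner_sub_right, inner_smul_right] at h1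
    rw [add_sub_right_comm, inner_add_right, inner_smul_right] at h3
    have hD : ⟪g u, D⟫ - ⟪g v, D⟫ = ‖D‖ ^ 2 := by
      rw [← inner_sub_left, real_inner_self_eq_norm_sq]
    have he : ⟪g v, u - v⟫ - ⟪g u, u - v⟫ = -⟪D, u - v⟫ := by rw [← neg_sub, ← inner_sub_left]
    rw [← neg_sub u v, inner_neg_right] at h3
    linear_combination h1 + h2 + h3 + h4 - 2 * t * hD - he
  rcases hK.eq_or_lt with rfl | hKpos
  · rw [zero_mul]
    by_contra! hpos
    generalize ‖D‖ ^ 2 = a at key hpos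
    have hbig := key ((⟪D, u - v⟫ + 1) / (2 * a))
    field_simp at hbig
    linarith
  · have := key K⁻¹
    field_simp at this
    linarith

end Cocoercive

section GradientStep

variable {H : Type*} [NormedAddCommGroup H] [InnerProductSpace ℝ H] [CompleteSpace H]
  {F : H → ℝ} {g : H → H} {μ L : ℝ}

theorem norm_sub_smul_sub_sub_smul_le (hF : ∀ x, HasGradientAt F (g x) x)
    (hmono : ∀ u v, μ * ‖u - v‖ ^ 2 ≤ ⟪g u - g v, u - v⟫)
    (hlip : ∀ u v, ‖g u - g v‖ ≤ L * ‖u - v‖) (hμL : μ ≤ L) {α : ℝ} (hα : 0 ≤ α)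
    (hαL : α * L ≤ 1) (u v : H) :
    ‖(u - α • g u) - (v - α • g v)‖ ≤ (1 - α * μ) * ‖u - v‖ := by
  -- Baillon–Haddad for the convex, `(L - μ)`-smooth function `F - μ/2 ‖·‖²`
  have hsq : ∀ x y : H, ‖y‖ ^ 2 = ‖x‖ ^ 2 + 2 * ⟪x, y - x⟫ + ‖y - x‖ ^ 2 := fun x y => by
    rw [← norm_add_sq_real, add_sub_cancel]
  have hcoco := norm_sub_sq_le_mul_inner_of_bounds (h := fun x => F x - μ / 2 * ‖x‖ ^ 2)
    (g := fun x => g x - μ • x) (sub_nonneg.2 hμL)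
    (fun x y => by
      have := add_inner_add_sq_le_of_inner_sub_ge hF hmono x y
      rw [inner_sub_left, real_inner_smul_left, hsq x y]
      linarith)
    (fun x y => by
      have := le_add_inner_add_sq_of_lipschitz hF hlip x y
      rw [inner_sub_left, real_inner_smul_left, hsq x y]
      linarith) u v
  set D := (g u - μ • u) - (g v - μ • v)
  have hD : ⟪D, u - v⟫ = ⟪g u - g v, u - v⟫ - μ * ‖u - v‖ ^ 2 := by
    rw [show D = (g u - g v) - μ • (u - v) by simp only [D]; module, inner_sub_left,
      real_inner_smul_left, real_inner_self_eq_norm_sq]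
  have hαμ : α * μ ≤ 1 := (mul_le_mul_of_nonneg_left hμL hα).trans hαL
  have hstep : (u - α • g u) - (v - α • g v) = (1 - α * μ) • (u - v) - α • D := by
    simp only [D]
    module
  have hsq_le : ‖(u - α • g u) - (v - α • g v)‖ ^ 2 ≤ ((1 - α * μ) * ‖u - v‖) ^ 2 := by
    rw [hstep, norm_sub_sq_real, norm_smul, norm_smul, Real.norm_of_nonneg hα,
      Real.norm_of_nonneg (sub_nonneg.2 hαμ), real_inner_smul_left, real_inner_smul_right,
      real_inner_comm]
    have hDnn : 0 ≤ ⟪D, u - v⟫ := by linarith [hmono u v]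
    have : α ^ 2 * ‖D‖ ^ 2 ≤ α ^ 2 * ((L - μ) * ⟪D, u - v⟫) := by gcongr
    -- `α (L - μ) ≤ 2 (1 - αμ)` since `αμ ≤ αL ≤ 1`
    nlinarith [mul_nonneg hα hDnn, mul_nonneg (mul_nonneg hα hα) hDnn]
  exact (pow_le_pow_iff_left₀ (norm_nonneg _)
    (mul_nonneg (sub_nonneg.2 hαμ) (norm_nonneg _)) two_ne_zero).1 hsq_le

end GradientStep

section ProjectedGradient

variable {H : Type*} [NormedAddCommGroup H] [InnerProductSpace ℝ H] [CompleteSpace H]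
  {X : Set H} {P : H → H} {F : H → ℝ} {g : H → H}

theorem inner_gradient_nonneg_of_isMinOn (hX : Convex ℝ X) {z g₀ : H}
    (hF : HasGradientAt F g₀ z) (hz : z ∈ X) (hmin : IsMinOn F X z) {u : H} (hu : u ∈ X) :
    0 ≤ ⟪g₀, u - z⟫ :=
  hmin.localize.hasFDerivWithinAt_nonneg hF.hasFDerivAt.hasFDerivWithinAt
    (sub_mem_posTangentConeAt_of_segment_subset (hX.segment_subset hz hu))

def projGradStep (P g : H → H) (α : ℝ) (v : H) : H :=
  P (v - α • g v)

theorem projGradStep_eq_self_of_isMinOn (hX : Convex ℝ X) (hPmem : ∀ v, P v ∈ X)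
    (hPproj : ∀ v, ∀ u ∈ X, ‖v - P v‖ ≤ ‖v - u‖) {z : H} (hF : HasGradientAt F (g z) z)
    (hz : z ∈ X) (hmin : IsMinOn F X z) {α : ℝ} (hα : 0 ≤ α) : projGradStep P g α z = z :=
  proj_eq_of_inner_le_zero hX hPmem hPproj hz fun u hu => by
    rw [sub_sub_cancel_left, inner_neg_left, real_inner_smul_left, neg_nonpos]
    exact mul_nonneg hα (inner_gradient_nonneg_of_isMinOn hX hF hz hmin hu)

theorem norm_projGradStep_sub_le {μ L α : ℝ} (hX : Convex ℝ X) (hPmem : ∀ v, P v ∈ X)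
    (hPproj : ∀ v, ∀ u ∈ X, ‖v - P v‖ ≤ ‖v - u‖) (hF : ∀ x, HasGradientAt F (g x) x)
    (hmono : ∀ u v, μ * ‖u - v‖ ^ 2 ≤ ⟪g u - g v, u - v⟫)
    (hlip : ∀ u v, ‖g u - g v‖ ≤ L * ‖u - v‖) (hμL : μ ≤ L) (hα : 0 ≤ α) (hαL : α * L ≤ 1)
    (a b : H) : ‖projGradStep P g α a - projGradStep P g α b‖ ≤ (1 - α * μ) * ‖a - b‖ :=
  (norm_proj_sub_proj_le hX hPmem hPproj _ _).trans
    (norm_sub_smul_sub_sub_smul_le hF hmono hlip hμL hα hαL a b)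

end ProjectedGradient

section Average

variable {H : Type*} [NormedAddCommGroup H] [InnerProductSpace ℝ H]

theorem hasGradientAt_const_mul_sum [CompleteSpace H] {ι : Type*} (s : Finset ι)
    {f : ι → H → ℝ} {g : ι → H} (c : ℝ) {x : H} (hf : ∀ l ∈ s, HasGradientAt (f l) (g l) x) :
    HasGradientAt (fun v => c * ∑ l ∈ s, f l v) (c • ∑ l ∈ s, g l) x := by
  rw [hasGradientAt_iff_hasFDerivAt, map_smul, map_sum]
  exact (HasFDerivAt.fun_sum fun l hl => (hf l hl).hasFDerivAt).const_mul c

variable {n : ℕ} [NeZero n] {g : Fin n → H → H}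

theorem inner_average_sub_ge {μ : ℝ} (hg : ∀ l u v, μ * ‖u - v‖ ^ 2 ≤ ⟪g l u - g l v, u - v⟫)
    (u v : H) :
    μ * ‖u - v‖ ^ 2 ≤ ⟪(1 / (n : ℝ)) • ∑ l, g l u - (1 / (n : ℝ)) • ∑ l, g l v, u - v⟫ := by
  rw [← smul_sub, ← sum_sub_distrib, real_inner_smul_left, sum_inner]
  calc μ * ‖u - v‖ ^ 2 = 1 / n * ∑ _l : Fin n, μ * ‖u - v‖ ^ 2 := by
        rw [sum_const, card_univ, Fintype.card_fin, nsmul_eq_mul, one_div,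
          inv_mul_cancel_left₀ (NeZero.ne _)]
    _ ≤ _ := by gcongr with l; exact hg l u v

theorem norm_average_sub_le {L : ℝ} (hg : ∀ l u v, ‖g l u - g l v‖ ≤ L * ‖u - v‖) (u v : H) :
    ‖(1 / (n : ℝ)) • ∑ l, g l u - (1 / (n : ℝ)) • ∑ l, g l v‖ ≤ L * ‖u - v‖ := by
  rw [← smul_sub, ← sum_sub_distrib, norm_smul, Real.norm_of_nonneg (by positivity)]
  calc 1 / n * ‖∑ l, (g l u - g l v)‖ ≤ 1 / n * ∑ _l : Fin n, L * ‖u - v‖ := by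
        gcongr
        exact (norm_sum_le _ _).trans (sum_le_sum fun l _ => hg l u v)
    _ = L * ‖u - v‖ := by
        rw [sum_const, card_univ, Fintype.card_fin, nsmul_eq_mul, one_div,
          inv_mul_cancel_left₀ (NeZero.ne _)]

end Average

theorem norm_relax_sub_relax_le {E : Type*} [SeminormedAddCommGroup E] [NormedSpace ℝ E]
    {T₁ T₂ : E → E} {ρ₁ ρ₂ lam : ℝ} {z : E}
    (hT₁ : ∀ a b, ‖T₁ a - T₁ b‖ ≤ ρ₁ * ‖a - b‖) (hT₂ : ∀ a b, ‖T₂ a - T₂ b‖ ≤ ρ₂ * ‖a - b‖)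
    (h₁ : T₁ z = z) (h₂ : T₂ z = z) (hlam0 : 0 ≤ lam) (hlam1 : lam ≤ 1) (a b : E) :
    ‖((1 - lam) • a + lam • T₁ a) - ((1 - lam) • b + lam • T₂ b)‖
      ≤ (1 - lam + lam * ρ₁) * ‖a - b‖ + lam * (ρ₁ + ρ₂) * ‖b - z‖ := by
  have hdecomp : ((1 - lam) • a + lam • T₁ a) - ((1 - lam) • b + lam • T₂ b)
      = (1 - lam) • (a - b) + lam • (T₁ a - T₁ b) + lam • (T₁ b - T₁ z)
        - lam • (T₂ b - T₂ z) := by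
    rw [h₁, h₂]
    module
  calc _ ≤ (1 - lam) * ‖a - b‖ + lam * ‖T₁ a - T₁ b‖ + lam * ‖T₁ b - T₁ z‖
        + lam * ‖T₂ b - T₂ z‖ := by
        rw [hdecomp]
        refine ((norm_sub_le _ _).trans (add_le_add_left norm_add₃_le _)).trans (le_of_eq ?_)
        simp only [norm_smul, Real.norm_of_nonneg hlam0, Real.norm_of_nonneg (sub_nonneg.2 hlam1)]
    _ ≤ (1 - lam) * ‖a - b‖ + lam * (ρ₁ * ‖a - b‖) + lam * (ρ₁ * ‖b - z‖)
        + lam * (ρ₂ * ‖b - z‖) := by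
        gcongr
        · exact hT₁ a b
        · exact hT₁ b z
        · exact hT₂ b z
    _ = _ := by ring

theorem sqrt_sum_mul_add_sq_le {ι : Type*} (s : Finset ι) {c : ι → ℝ} (hc : ∀ i ∈ s, 0 ≤ c i)
    (a b : ι → ℝ) :
    √(∑ i ∈ s, c i * (a i + b i) ^ 2)
      ≤ √(∑ i ∈ s, c i * a i ^ 2) + √(∑ i ∈ s, c i * b i ^ 2) := by
  set A := ∑ i ∈ s, c i * a i ^ 2
  set B := ∑ i ∈ s, c i * b i ^ 2
  have hA : 0 ≤ A := sum_nonneg fun i hi => mul_nonneg (hc i hi) (sq_nonneg _)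
  have hB : 0 ≤ B := sum_nonneg fun i hi => mul_nonneg (hc i hi) (sq_nonneg _)
  have hcs : ∑ i ∈ s, c i * a i * b i ≤ √A * √B := by
    rw [← Real.sqrt_mul hA]
    refine (le_abs_self _).trans (Real.abs_le_sqrt ?_)
    exact sum_sq_le_sum_mul_sum_of_sq_le_mul s
      (fun i hi => mul_nonneg (hc i hi) (sq_nonneg _))
      (fun i hi => mul_nonneg (hc i hi) (sq_nonneg _)) (fun i _ => le_of_eq (by ring))
  have hexp : ∑ i ∈ s, c i * (a i + b i) ^ 2 = A + 2 * ∑ i ∈ s, c i * a i * b i + B := by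
    rw [mul_sum, ← sum_add_distrib, ← sum_add_distrib]
    exact sum_congr rfl fun i _ => by ring
  rw [Real.sqrt_le_left (by positivity), hexp]
  nlinarith [Real.sq_sqrt hA, Real.sq_sqrt hB]

theorem Derr_le_of_norm_sub_le {n d : ℕ} {φ : Fin n → ℝ} (hφ : ∀ i, 0 ≤ φ i)
    (hφsum : ∑ i, φ i = 1) {A B : ℝ} (hA : 0 ≤ A) (hB : 0 ≤ B)
    {x w : Fin n → EuclideanSpace ℝ (Fin d)} {z : EuclideanSpace ℝ (Fin d)}
    (h : ∀ i j, ‖w i - w j‖ ≤ A * ‖x i - x j‖ + B * ‖x j - z‖) :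
    Derr φ w ≤ A * Derr φ x + B * √(∑ i, φ i * ‖x i - z‖ ^ 2) := by
  have hφφ : ∀ p ∈ (univ : Finset (Fin n × Fin n)), 0 ≤ φ p.1 * φ p.2 :=
    fun p _ => mul_nonneg (hφ _) (hφ _)
  calc Derr φ w
      ≤ √(∑ p : Fin n × Fin n,
          φ p.1 * φ p.2 * (A * ‖x p.1 - x p.2‖ + B * ‖x p.2 - z‖) ^ 2) := by
        rw [Derr, ← Fintype.sum_prod_type']
        gcongr with p
        · exact hφφ p (mem_univ p)
        · exact h _ _
    _ ≤ √(∑ p : Fin n × Fin n, φ p.1 * φ p.2 * (A * ‖x p.1 - x p.2‖) ^ 2)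
        + √(∑ p : Fin n × Fin n, φ p.1 * φ p.2 * (B * ‖x p.2 - z‖) ^ 2) :=
        sqrt_sum_mul_add_sq_le _ hφφ _ _
    _ = A * Derr φ x + B * √(∑ i, φ i * ‖x i - z‖ ^ 2) := by
        have hxx : ∑ p : Fin n × Fin n, φ p.1 * φ p.2 * (A * ‖x p.1 - x p.2‖) ^ 2
            = A ^ 2 * ∑ i, ∑ j, φ i * φ j * ‖x i - x j‖ ^ 2 := by
          rw [Fintype.sum_prod_type, mul_sum]
          exact sum_congr rfl fun i _ => by rw [mul_sum]; exact sum_congr rfl fun j _ => by ring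
        have hxz : ∑ p : Fin n × Fin n, φ p.1 * φ p.2 * (B * ‖x p.2 - z‖) ^ 2
            = B ^ 2 * ∑ i, φ i * ‖x i - z‖ ^ 2 := by
          simp_rw [Fintype.sum_prod_type, mul_assoc, ← mul_sum, ← sum_mul, hφsum, one_mul,
            mul_sum]
          exact sum_congr rfl fun i _ => by ring
        rw [hxx, hxz, Real.sqrt_mul (sq_nonneg _), Real.sqrt_mul (sq_nonneg _),
          Real.sqrt_sq hA, Real.sqrt_sq hB, Derr]

theorem le_qmax {n : ℕ} [NeZero n] (π : Fin n → ℝ) (μ η lam : ℝ) (i : Fin n) :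
    1 - lam * (η * n * π i) * μ ≤ qmax π μ η lam :=
  le_sup' (fun i => 1 - lam * (η * n * π i) * μ) (mem_univ i)

theorem qmax_nonneg {n : ℕ} [NeZero n] {π : Fin n → ℝ} {μ η lam : ℝ}
    (h : ∀ i, η * n * π i * μ ≤ 1) (hlam0 : 0 ≤ lam) (hlam1 : lam ≤ 1) :
    0 ≤ qmax π μ η lam :=
  le_trans (by nlinarith [h 0]) (le_qmax π μ η lam 0)

theorem stepSize_mul_le_one {n : ℕ} {π : Fin n → ℝ} (hπ : ∀ i, 0 ≤ π i) (hπsum : ∑ i, π i = 1)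
    {η L : ℝ} (hη0 : 0 < η) (hη : η < 1 / (n * L)) (i : Fin n) : η * n * π i * L ≤ 1 := by
  have hnL : 0 < n * L := one_div_pos.1 (hη0.trans hη)
  have hηnL := (lt_div_iff₀ hnL).1 hη
  have hπ1 : π i ≤ 1 := hπsum ▸ single_le_sum (fun j _ => hπ j) (mem_univ i)
  nlinarith [mul_le_mul_of_nonneg_left hπ1 (mul_pos hη0 hnL).le]

theorem perfect_gradient_consensus_bound_general {n d : ℕ} [NeZero n]
    (X : Set (EuclideanSpace ℝ (Fin d)))
    (hXconvex : Convex ℝ X)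
    (P : EuclideanSpace ℝ (Fin d) → EuclideanSpace ℝ (Fin d))
    (hPmem : ∀ v, P v ∈ X)
    (hPproj : ∀ v, ∀ u ∈ X, ‖v - P v‖ ≤ ‖v - u‖)
    (f : Fin n → EuclideanSpace ℝ (Fin d) → ℝ)
    (hfdiff : ∀ i, Differentiable ℝ (f i))
    (μ L : ℝ) (hμL : μ ≤ L)
    (hstrong : ∀ i u v, μ * ‖u - v‖ ^ 2 ≤ ⟪gradient (f i) u - gradient (f i) v, u - v⟫)
    (hsmooth : ∀ i u v, ‖gradient (f i) u - gradient (f i) v‖ ≤ L * ‖u - v‖)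
    (F : EuclideanSpace ℝ (Fin d) → ℝ)
    (hF : F = fun v => (1 / (n : ℝ)) * ∑ l, f l v)
    (xs : EuclideanSpace ℝ (Fin d)) (hxsmem : xs ∈ X)
    (hxsmin : ∀ u ∈ X, F xs ≤ F u)
    (φ π : Fin n → ℝ)
    (hφpos : ∀ i, 0 < φ i) (hφsum : ∑ i, φ i = 1)
    (hπpos : ∀ i, 0 < π i) (hπsum : ∑ i, π i = 1)
    (η lam : ℝ) (hη0 : 0 < η) (hη : η < 1 / (n * L)) (hlam0 : 0 < lam) (hlam1 : lam ≤ 1)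
    (x : Fin n → EuclideanSpace ℝ (Fin d))
    (w : Fin n → EuclideanSpace ℝ (Fin d))
    (hw : ∀ i, w i = (1 - lam) • x i + lam • P (x i - (η * n * π i) • gradient F (x i))) :
    Derr φ w ≤ qmax π μ η lam * Derr φ x
      + 2 * lam * qmax π μ η 1 * Real.sqrt (∑ i, φ i * ‖x i - xs‖ ^ 2) := by
  set g := fun v => (1 / (n : ℝ)) • ∑ l, gradient (f l) v
  have hFg : ∀ v, HasGradientAt F (g v) v := fun v => hF ▸
    hasGradientAt_const_mul_sum univ _ fun l _ => (hfdiff l v).hasGradientAt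
  have hα : ∀ i, 0 ≤ η * n * π i := fun i => by have := hπpos i; positivity
  have hαL := stepSize_mul_le_one (fun i => (hπpos i).le) hπsum hη0 hη
  have hαμ : ∀ i, η * n * π i * μ ≤ 1 := fun i =>
    (mul_le_mul_of_nonneg_left hμL (hα i)).trans (hαL i)
  have hT := fun i => norm_projGradStep_sub_le hXconvex hPmem hPproj hFg
    (inner_average_sub_ge hstrong) (norm_average_sub_le hsmooth) hμL (hα i) (hαL i)
  have hfix := fun i => projGradStep_eq_self_of_isMinOn hXconvex hPmem hPproj (hFg xs) hxsmem
    (isMinOn_iff.2 hxsmin) (hα i)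
  refine Derr_le_of_norm_sub_le (fun i => (hφpos i).le) hφsum (qmax_nonneg hαμ hlam0.le hlam1)
    (mul_nonneg (by positivity) (qmax_nonneg hαμ zero_le_one le_rfl)) fun i j => ?_
  rw [hw i, hw j, (hFg _).gradient, (hFg _).gradient]
  refine (norm_relax_sub_relax_le (hT i) (hT j) (hfix i) (hfix j) hlam0.le hlam1 _ _).trans ?_
  gcongr ?_ * _ + ?_ * _
  · linarith [le_qmax π μ η lam i]
  · nlinarith [le_qmax π μ η 1 i, le_qmax π μ η 1 j]

/-- Consensus under perfect gradient knowledge,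
Proposition `w-consensus-bound`. With `w_i = (1 − λ)x_i + λP(x_i − ηnπ_i ∇f(x_i))`,
`D(w, φ) ≤ q_π(η, λ)·D(x, φ) + 2λ·q_π(η, 1)·√(Σ_i φ_i ‖x_i − x*‖²)`. -/
theorem perfect_gradient_consensus_bound {n d : ℕ} [NeZero n]
    (X : Set (EuclideanSpace ℝ (Fin d))) (hXne : X.Nonempty)
    (hXclosed : IsClosed X) (hXconvex : Convex ℝ X)
    (P : EuclideanSpace ℝ (Fin d) → EuclideanSpace ℝ (Fin d))
    (hPmem : ∀ v, P v ∈ X)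
    (hPproj : ∀ v, ∀ u ∈ X, ‖v - P v‖ ≤ ‖v - u‖)
    (f : Fin n → EuclideanSpace ℝ (Fin d) → ℝ)
    (hfdiff : ∀ i, Differentiable ℝ (f i))
    (μ L : ℝ) (hμ : 0 < μ) (hμL : μ ≤ L)
    (hstrong : ∀ i u v, μ * ‖u - v‖ ^ 2 ≤ ⟪gradient (f i) u - gradient (f i) v, u - v⟫)
    (hsmooth : ∀ i u v, ‖gradient (f i) u - gradient (f i) v‖ ≤ L * ‖u - v‖)
    (F : EuclideanSpace ℝ (Fin d) → ℝ)
    (hF : F = fun v => (1 / (n : ℝ)) * ∑ l, f l v)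
    (xs : EuclideanSpace ℝ (Fin d)) (hxsmem : xs ∈ X)
    (hxsmin : ∀ u ∈ X, F xs ≤ F u)
    (hxsuniq : ∀ u ∈ X, (∀ v ∈ X, F u ≤ F v) → u = xs)
    (φ π : Fin n → ℝ)
    (hφpos : ∀ i, 0 < φ i) (hφsum : ∑ i, φ i = 1)
    (hπpos : ∀ i, 0 < π i) (hπsum : ∑ i, π i = 1)
    (η lam : ℝ) (hη0 : 0 < η) (hη : η < 1 / (n * L)) (hlam0 : 0 < lam) (hlam1 : lam ≤ 1)
    (x : Fin n → EuclideanSpace ℝ (Fin d))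
    (w : Fin n → EuclideanSpace ℝ (Fin d))
    (hw : ∀ i, w i = (1 - lam) • x i + lam • P (x i - (η * n * π i) • gradient F (x i))) :
    Derr φ w ≤ qmax π μ η lam * Derr φ x
      + 2 * lam * qmax π μ η 1 * Real.sqrt (∑ i, φ i * ‖x i - xs‖ ^ 2) :=
  perfect_gradient_consensus_bound_general X hXconvex P hPmem hPproj f hfdiff μ L hμL hstrong
    hsmooth F hF xs hxsmem hxsmin φ π hφpos hφsum hπpos hπsum η lam hη0 hη hlam0 hlam1 x w hw
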